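/- arXiv:2104.00176 — 3 statements merged into one kernel-verified Lean document; each statement's English description precedes it below -/
import Mathlib

section
/- In the belief MDP H, reachable states have consistent beliefs: every state (s, B) reachable from the initial state (s₀, {s₀}) via transitions of the form (s, B) → (s', Post(B, a) ∩ o) with s' ∈ Post(s, a), s' ∈ o, satisfies s ∈ B. -/
/-! Belief consistency is an invariant of the belief update: if `s ∈ B` and `s'` is reached from
`s` by action `a` and observed in `o`, then `s'` lies in `Post(B, a) ∩ o` because `s` is one of
the states the union `Post(B, a)` ranges over. It holds initially since `s₀ ∈ {s₀}`. -/

open Relation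

namespace BeliefMDP

variable {S A : Type*} (Post : S → A → Set S)

def Step (p q : S × Set S) : Prop :=
  ∃ (a : A) (o : Set S), q.1 ∈ Post p.1 a ∧ q.1 ∈ o ∧ q.2 = (⋃ t ∈ p.2, Post t a) ∩ o

variable {Post}

theorem Step.fst_mem_snd {p q : S × Set S} (hp : p.1 ∈ p.2) (h : Step Post p q) : q.1 ∈ q.2 := by
  obtain ⟨a, o, hpost, hobs, hbelief⟩ := h
  rw [hbelief]
  exact ⟨Set.mem_biUnion hp hpost, hobs⟩

theorem fst_mem_snd_of_reflTransGen_step {p q : S × Set S} (hp : p.1 ∈ p.2)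
    (h : ReflTransGen (Step Post) p q) : q.1 ∈ q.2 := by
  induction h with
  | refl => exact hp
  | tail _ hstep ih => exact hstep.fst_mem_snd ih

end BeliefMDP

/-- In the belief MDP, every state `(s, B)` reachable from `(s₀, {s₀})` via
belief-update transitions satisfies `s ∈ B` (belief consistency). -/
theorem belief_mdp_consistent {S A : Type*} (Post : S → A → Set S) (s₀ : S)
    (s : S) (B : Set S)
    (h : Relation.ReflTransGen
      (fun p q : S × Set S => ∃ (a : A) (o : Set S),
        q.1 ∈ Post p.1 a ∧ q.1 ∈ o ∧ q.2 = (⋃ t ∈ p.2, Post t a) ∩ o)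
      (s₀, {s₀}) (s, B)) :
    s ∈ B :=
  BeliefMDP.fst_mem_snd_of_reflTransGen_step (Set.mem_singleton s₀) h
end

section
/- Completeness direction (safety invariance): let Win = Q \ ⋃_i L_i be the output of the elimination algorithm with final allowed-action map π. Then for every q ∈ Win, π(q) ≠ ∅, and for every action a ∈ π(q), Post(q, a) ⊆ Win ∪ {q_F}; i.e., Win ∪ {q_F} is closed under the allowed actions. -/
/-- The eliminated states `⋃ k, L k` of the action-elimination algorithm,
as a fixpoint (witnesses given functionally for kernel acceptability). -/
inductive Eliminated {Q A : Type*} (Post : Q → A → Set Q) (enabled : Q → Set A)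
    (equiv : Q → Q → Prop) (L0 : Set Q) : Q → Prop
  | base (q : Q) : q ∈ L0 → Eliminated Post enabled equiv L0 q
  | step (q : Q) (p u : A → Q) :
      (∀ a ∈ enabled q, equiv (p a) q ∧ u a ∈ Post (p a) a) →
      (∀ a ∈ enabled q, Eliminated Post enabled equiv L0 (u a)) →
      Eliminated Post enabled equiv L0 q

namespace Eliminated

variable {Q A : Type*} {Post : Q → A → Set Q} {enabled : Q → Set A}
  {equiv : Q → Q → Prop} {L0 : Set Q}

theorem of_forall_enabled {q : Q}
    (h : ∀ a ∈ enabled q, ∃ p, equiv p q ∧ ∃ u ∈ Post p a,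
      Eliminated Post enabled equiv L0 u) :
    Eliminated Post enabled equiv L0 q := by
  -- `step` wants total witness functions; off `enabled q` they take a junk value in `Q`.
  have : Nonempty Q := ⟨q⟩
  choose! p hpq u hu hel using h
  exact .step q p u (fun a ha => ⟨hpq a ha, hu a ha⟩) hel

theorem exists_safe_action {q : Q} (hq : ¬ Eliminated Post enabled equiv L0 q) :
    ∃ a ∈ enabled q, ∀ p, equiv p q → ∀ u ∈ Post p a,
      ¬ Eliminated Post enabled equiv L0 u := by
  contrapose! hq
  exact of_forall_enabled hq

end Eliminated

theorem elimination_safety_general {Q A : Type*}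
    (Post : Q → A → Set Q) (enabled : Q → Set A)
    (equiv : Q → Q → Prop) (hequiv : Equivalence equiv) (qF : Q)
    (L0 : Set Q)
    (Win : Set Q) (hWin : Win = {q | ¬ Eliminated Post enabled equiv L0 q})
    (π : Q → Set A)
    (hπ : ∀ q, π q = {a ∈ enabled q | ∀ p, equiv p q →
        ∀ u ∈ Post p a, ¬ Eliminated Post enabled equiv L0 u}) :
    ∀ q ∈ Win, (π q).Nonempty ∧ ∀ a ∈ π q, Post q a ⊆ Win ∪ {qF} := by
  subst hWin
  intro q hq
  refine ⟨?_, fun a ha u hu => ?_⟩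
  · rw [hπ]
    exact Eliminated.exists_safe_action hq
  · rw [hπ] at ha
    exact Or.inl (ha.2 q (hequiv.refl q) u hu)

/-- Completeness direction (safety invariance): on the output winning region
`Win = Q \ ⋃ᵢ Lᵢ`, the final allowed-action map `π` (enabled actions never
removed, i.e. whose successors from every `∼`-equivalent state avoid the
eliminated set) is nonempty, and every allowed action keeps the play in
`Win ∪ {q_F}`. -/
theorem elimination_safety {Q A : Type*} [Finite Q] [Finite A]
    (Post : Q → A → Set Q) (enabled : Q → Set A)
    (equiv : Q → Q → Prop) (hequiv : Equivalence equiv) (qF : Q)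
    (hsink : ∀ a, Post qF a ⊆ {qF})
    (L0 : Set Q)
    (hL0 : L0 = {q | ¬ Relation.ReflTransGen
        (fun x y => ∃ a ∈ enabled x, y ∈ Post x a) q qF})
    (Win : Set Q) (hWin : Win = {q | ¬ Eliminated Post enabled equiv L0 q})
    (π : Q → Set A)
    (hπ : ∀ q, π q = {a ∈ enabled q | ∀ p, equiv p q →
        ∀ u ∈ Post p a, ¬ Eliminated Post enabled equiv L0 u}) :
    ∀ q ∈ Win, (π q).Nonempty ∧ ∀ a ∈ π q, Post q a ⊆ Win ∪ {qF} :=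
  elimination_safety_general Post enabled equiv hequiv qF L0 Win hWin π hπ
end

section
/- Existence of a deceptive almost-sure winning state for the attacker: in the 4-state example game there is a state that lies in P1's computed almost-sure winning region yet is almost-sure winning for P2. Concretely: in the belief-MDP over states {(s₀,{s₀}), (s₀,{s₀,s₁}), (s₁,{s₀,s₁}), (s₁,{s₁}), q_F}, with P1's strategy choosing (a₀,σ₀) at all non-final states except (s₁,{s₁}) where (a₁,·) reaches q_F, the attacker's memoryless strategy of always playing β₀ (jamming sensor 0) confines the play forever to the set {(s₀,{s₀}), (s₀,{s₀,s₁}), (s₁,{s₀,s₁})}; i.e., this set is closed under all transitions enabled by P1's strategy combined with attack β₀, and q_F is never reached. -/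
namespace AttackExample

/-- States `s₀, s₁, s₂, s₃` as `Fin 4`; `s₂` is the final state. -/
abbrev S := Fin 4
/-- Sensors `0, 1, 2` as `Fin 3`. -/
abbrev Sensor := Fin 3
/-- Actions `a₀, a₁` as `Fin 2`. -/
abbrev Act := Fin 2

/-- Sensor coverage: γ(0) = {s₁}, γ(1) = {s₀, s₁}, γ(2) = {s₂, s₃}. -/
def γ : Sensor → Set S := ![{1}, {0, 1}, {2, 3}]

/-- Transitions: Post(s₀,a₀) = {s₀,s₁}, Post(s₁,a₀) = {s₀},
Post(s₀,a₁) = {s₃}, Post(s₁,a₁) = {s₂}; no transitions elsewhere. -/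
def Post : S → Act → Set S
  | 0, 0 => {0, 1}
  | 1, 0 => {0}
  | 0, 1 => {3}
  | 1, 1 => {2}
  | _, _ => ∅

/-- Observation: states agreeing with `s` on every unattacked queried sensor. -/
def Obs (s : S) (σ β : Set Sensor) : Set S :=
  {t | ∀ i ∈ σ \ β, (s ∈ γ i ↔ t ∈ γ i)}

/-- P1's query σ₀ = {0, 1}. -/
def σ₀ : Set Sensor := {0, 1}

/-- P2's attack β₀ jamming sensor 0. -/
def β₀ : Set Sensor := {0}

/-- The set {(s₀,{s₀}), (s₀,{s₀,s₁}), (s₁,{s₀,s₁})} of belief-MDP states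
(all in P1's computed almost-sure winning region). -/
def K : Set (S × Set S) :=
  {(0, {0}), (0, ({0, 1} : Set S)), (1, ({0, 1} : Set S))}

/-! With sensor 0 jammed, P1 reads only sensor 1, which covers both `s₀` and `s₁`; so every
observation made from `s₀` or `s₁` is `{s₀, s₁}`. Playing `a₀` from a belief containing `s₀`
inside `{s₀, s₁}` therefore always produces the belief `{s₀, s₁}` again, and the true state
stays in `{s₀, s₁}`, so the play never gets to `s₂` nor to the belief `{s₁}` from which P1
would play `a₁`. -/

lemma sdiff_σ₀_β₀ : σ₀ \ β₀ = {1} := by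
  ext i
  fin_cases i <;> simp [σ₀, β₀]

lemma mem_Obs_σ₀_β₀ {s t : S} : t ∈ Obs s σ₀ β₀ ↔ (s ∈ γ 1 ↔ t ∈ γ 1) := by
  simp [Obs, sdiff_σ₀_β₀]

lemma γ_one : γ 1 = {0, 1} := rfl

lemma Obs_σ₀_β₀_of_mem {s : S} (hs : s ∈ ({0, 1} : Set S)) :
    Obs s σ₀ β₀ = {0, 1} := by
  ext t
  rw [mem_Obs_σ₀_β₀, γ_one]
  exact iff_true_left hs

lemma Post_zero_subset {s : S} (hs : s ∈ ({0, 1} : Set S)) : Post s 0 ⊆ {0, 1} := by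
  rcases hs with rfl | rfl <;> simp [Post]

lemma biUnion_Post_zero {B : Set S} (h0 : 0 ∈ B) (hB : B ⊆ {0, 1}) :
    ⋃ t ∈ B, Post t 0 = {0, 1} := by
  refine (Set.iUnion₂_subset fun t (ht : t ∈ B) => Post_zero_subset (hB ht)).antisymm ?_
  simpa [Post] using Set.subset_biUnion_of_mem (u := (Post · 0)) h0

lemma mem_K_elim {q : S × Set S} (hq : q ∈ K) :
    q.1 ∈ ({0, 1} : Set S) ∧ 0 ∈ q.2 ∧ q.2 ⊆ {0, 1} := by
  rcases hq with rfl | rfl | rfl <;> simp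

lemma mk_mem_K {s : S} (hs : s ∈ ({0, 1} : Set S)) : (s, ({0, 1} : Set S)) ∈ K := by
  rcases hs with rfl | rfl <;> simp [K]

/-- Existence of a deceptive almost-sure winning state for the attacker:
with P1 playing `(a₀, σ₀)` at the states of `K` and P2 always jamming sensor 0
(attack `β₀`), the play is confined to `K` forever: `K` is closed under all
resulting belief transitions, and the target is never reached — no state of
`K` has true state `s₂` and `K` excludes `(s₁, {s₁})`, the only state where
P1 would play `a₁` to reach `q_F`. -/
theorem attacker_deceptive_win :
    (∀ q ∈ K, ∀ q' : S × Set S,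
      (q'.1 ∈ Post q.1 0 ∧ q'.2 = (⋃ t ∈ q.2, Post t 0) ∩ Obs q'.1 σ₀ β₀) →
        q' ∈ K)
    ∧ (∀ q ∈ K, q.1 ≠ 2 ∧ q ≠ (1, ({1} : Set S))) := by
  refine ⟨fun q hq ⟨s', B'⟩ ⟨hs', hB'⟩ => ?_, fun q hq => ?_⟩
  · dsimp only at hs' hB'
    obtain ⟨hs, h0, hB⟩ := mem_K_elim hq
    have hs'_mem : s' ∈ ({0, 1} : Set S) := Post_zero_subset hs hs'
    obtain rfl : B' = {0, 1} := by
      rw [hB', biUnion_Post_zero h0 hB, Obs_σ₀_β₀_of_mem hs'_mem, Set.inter_self]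
    exact mk_mem_K hs'_mem
  · obtain ⟨hs, h0, -⟩ := mem_K_elim hq
    exact ⟨fun h => by simp [h] at hs, by rintro rfl; simp at h0⟩

end AttackExample
end
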